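/- Let n be a positive integer. For k ∈ Ξ_n define ℓ_k(x) := λ_k · (1/4) · Σ_{(ε₁,ε₂) ∈ {−1,1}²} Φ_n^*(ε₁x₁ − k₁/(2n), ε₂x₂ − k₂/(2n)). Then for every function f : ℝ² → ℂ and every j ∈ Ξ_n, Σ_{k ∈ Ξ_n} f(k/(2n)) · ℓ_k(j/(2n)) = f(j/(2n)); equivalently, ℓ_k(j/(2n)) = δ_{k,j} for all j, k ∈ Ξ_n. -/

import Mathlib

open MeasureTheory Complex

attribute [local instance] Classical.propDecidable

/-- The exponential e_k(x) = exp(2 pi i (k1 x1 + k2 x2)). -/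
noncomputable def e2 (k : ℤ × ℤ) (x : ℝ × ℝ) : ℂ :=
  Complex.exp (2 * Real.pi * Complex.I * ((k.1 : ℂ) * x.1 + (k.2 : ℂ) * x.2))

/-- The point k/(2n) in the plane. -/
noncomputable def pt2 (n : ℕ) (k : ℤ × ℤ) : ℝ × ℝ :=
  ((k.1 : ℝ) / (2 * n), (k.2 : ℝ) / (2 * n))

/-- Λ_m^* = {j : |j1+j2| ≤ m and |j1-j2| ≤ m}. -/
noncomputable def LamStar (m : ℕ) : Finset (ℤ × ℤ) :=
  (Finset.Icc (-(m : ℤ), -(m : ℤ)) ((m : ℤ), (m : ℤ))).filter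
    fun j => |j.1 + j.2| ≤ (m : ℤ) ∧ |j.1 - j.2| ≤ (m : ℤ)

/-- The weight c̃_ν on Λ_n^*. -/
noncomputable def ctilde (n : ℕ) (ν : ℤ × ℤ) : ℝ :=
  if |ν.1 + ν.2| < (n : ℤ) ∧ |ν.1 - ν.2| < (n : ℤ) then 1
  else if |ν.1 + ν.2| = (n : ℤ) ∧ |ν.1 - ν.2| = (n : ℤ) then 1/4
  else 1/2

/-- Φ_n^*(x) = (1/(2n²)) Σ_{ν ∈ Λ_n^*} c̃_ν e_ν(x). -/
noncomputable def PhiStar (n : ℕ) (x : ℝ × ℝ) : ℂ :=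
  (1 / (2 * (n : ℂ) ^ 2)) * ∑ ν ∈ LamStar n, (ctilde n ν : ℂ) * e2 ν x

/-- Ξ_n = {k : 0 ≤ k_i ≤ n, k1 ≡ k2 (mod 2)}. -/
noncomputable def Xi2 (n : ℕ) : Finset (ℤ × ℤ) :=
  (Finset.Icc ((0 : ℤ), (0 : ℤ)) ((n : ℤ), (n : ℤ))).filter
    fun k => k.1 % 2 = k.2 % 2

/-- The cubature weight λ_k on Ξ_n. -/
noncomputable def lam2 (n : ℕ) (k : ℤ × ℤ) : ℝ :=
  if (0 < k.1 ∧ k.1 < (n : ℤ)) ∧ (0 < k.2 ∧ k.2 < (n : ℤ)) then 4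
  else if (k.1 = 0 ∨ k.1 = (n : ℤ)) ∧ (k.2 = 0 ∨ k.2 = (n : ℤ)) then 1
  else 2

/-- The fundamental interpolation function ℓ_k. -/
noncomputable def ell2 (n : ℕ) (k : ℤ × ℤ) (x : ℝ × ℝ) : ℂ :=
  (lam2 n k : ℂ) * (1 / 4) *
    ∑ ε ∈ (({-1, 1} : Finset ℤ) ×ˢ ({-1, 1} : Finset ℤ)),
      PhiStar n ((ε.1 : ℝ) * x.1 - (k.1 : ℝ) / (2 * n), (ε.2 : ℝ) * x.2 - (k.2 : ℝ) / (2 * n))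

/-!
On the nodes, `Φ_n^*` is a discrete delta function: if `m₁ ≡ m₂ (mod 2)`, then `Φ_n^*(m/(2n))`
is `1` when `2n` divides both `m₁` and `m₂`, and `0` otherwise. With `ζ = exp(πi/n)` one has
`e_ν(m/(2n)) = ζ^(ν·m)`. In the coordinates `u = ν₁ + ν₂`, `v = ν₁ - ν₂` the set `Λ_n^*` becomes
the pairs in `[-n, n]²` with `u ≡ v (mod 2)`, and `c̃_ν = w(u) w(v)` for the trapezoid weight `w`,
which is `1/2` at `±n` and `1` inside. Writing the parity condition as `(1 + (-1)^(u+v))/2` and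
using `(-1)^u = ζ^(nu)` splits the sum into two products of one-dimensional sums `Σ w(u) ζ^(up)`.
Each of these is `2n` or `0` according as `2n ∣ p`, because `u ↦ ζ^(up)` has period `2n` and the
two half-weighted endpoints together make up one full period.

For nodes `j, k ∈ Ξ_n`, the point `(ε₁j₁ - k₁, ε₂j₂ - k₂)` is `≡ 0 (mod 2n)` only if `j = k`, and
then this holds for exactly `4/λ_k` of the sign vectors `ε`. Hence `ℓ_k(j/(2n)) = δ_{k,j}`.
-/

section TrapezoidSum

variable {K : Type*} [Field K]

def trapezoidWeight (n : ℕ) (u : ℤ) : K := if |u| = n then 2⁻¹ else 1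

theorem sum_Ico_zpow_of_pow_eq_one {n : ℕ} (hn : 0 < n) {z : K} (hz : z ^ (2 * n) = 1) :
    ∑ u ∈ Finset.Ico (-(n : ℤ)) n, z ^ u = if z = 1 then (2 * n : K) else 0 := by
  split_ifs with h1
  · simp only [h1, one_zpow, Finset.sum_const, Int.card_Ico, nsmul_eq_mul, mul_one]
    rw [show (n - -(n : ℤ)).toNat = 2 * n by omega]
    push_cast; rfl
  have hz0 : z ≠ 0 := by rintro rfl; simp [hn.ne'] at hz
  have reindex : ∑ u ∈ Finset.Ico (-(n : ℤ)) n, z ^ u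
      = z ^ (-(n : ℤ)) * ∑ i ∈ Finset.range (2 * n), z ^ i := by
    rw [Finset.mul_sum]
    refine Finset.sum_nbij' (fun u => (u + n).toNat) (fun i => (i : ℤ) - n) ?_ ?_ ?_ ?_ ?_ <;>
      intro u hu <;> simp only [Finset.mem_Ico, Finset.mem_range] at hu ⊢ <;>
      first
      | omega
      | rw [← zpow_natCast, ← zpow_add₀ hz0]; congr 1; omega
  rw [reindex, geom_sum_eq h1, hz, sub_self, zero_div, mul_zero]

theorem sum_trapezoidWeight_mul_zpow [NeZero (2 : K)] {n : ℕ} (hn : 0 < n) {z : K}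
    (hz : z ^ (2 * n) = 1) :
    ∑ u ∈ Finset.Icc (-(n : ℤ)) n, trapezoidWeight n u * z ^ u
      = if z = 1 then (2 * n : K) else 0 := by
  have hz0 : z ≠ 0 := by rintro rfl; simp [hn.ne'] at hz
  have hzn : z ^ (-(n : ℤ)) = z ^ (n : ℤ) := by
    rw [zpow_neg, zpow_natCast]
    exact inv_eq_of_mul_eq_one_left (by rw [← pow_add, ← two_mul, hz])
  have hnn : -(n : ℤ) < n := by omega
  have interior : ∀ u ∈ Finset.Ioo (-(n : ℤ)) n, trapezoidWeight n u * z ^ u = z ^ u := by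
    intro u hu
    rw [Finset.mem_Ioo] at hu
    rw [trapezoidWeight, if_neg (by rw [abs_eq (by omega)]; omega), one_mul]
  rw [← sum_Ico_zpow_of_pow_eq_one hn hz, ← Finset.Ico_insert_right hnn.le,
    ← Finset.Ioo_insert_left hnn, Finset.sum_insert (by simp; omega),
    Finset.sum_insert (by simp), Finset.sum_insert (by simp),
    Finset.sum_congr rfl interior,
    trapezoidWeight, trapezoidWeight, if_pos (by simp), if_pos (by simp), hzn]
  linear_combination z ^ (n : ℤ) * inv_mul_cancel₀ (two_ne_zero (α := K))

noncomputable def trapezoidSum (n : ℕ) (ζ : K) (p : ℤ) : K :=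
  ∑ u ∈ Finset.Icc (-(n : ℤ)) n, trapezoidWeight n u * ζ ^ (u * p)

theorem IsPrimitiveRoot.trapezoidSum_eq [NeZero (2 : K)] {n : ℕ} (hn : 0 < n)
    {ζ : K} (hζ : IsPrimitiveRoot ζ (2 * n)) (p : ℤ) :
    trapezoidSum n ζ p = if (2 * n : ℤ) ∣ p then (2 * n : K) else 0 := by
  have hz : (ζ ^ p) ^ (2 * n) = 1 := by
    rw [← zpow_natCast, ← zpow_mul, mul_comm, zpow_mul, zpow_natCast, hζ.pow_eq_one, one_zpow]
  simp_rw [trapezoidSum, mul_comm _ p, zpow_mul]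
  rw [sum_trapezoidWeight_mul_zpow hn hz, hζ.zpow_eq_one_iff_dvd]
  push_cast
  rfl

theorem sum_filter_even_eq_half_sum {ι : Type*} [NeZero (2 : K)] (s : Finset ι) (f : ι → ℤ)
    (g : ι → K) :
    ∑ i ∈ s with Even (f i), g i = 2⁻¹ * ∑ i ∈ s, (1 + (-1) ^ f i) * g i := by
  rw [Finset.sum_filter, Finset.mul_sum]
  refine Finset.sum_congr rfl fun i _ => ?_
  rcases Int.even_or_odd (f i) with h | h
  · rw [if_pos h, h.neg_one_zpow, one_add_one_eq_two, ← mul_assoc, inv_mul_cancel₀ two_ne_zero,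
      one_mul]
  · rw [if_neg (Int.not_even_iff_odd.mpr h), h.neg_one_zpow]; ring

end TrapezoidSum

theorem two_mul_dvd_add_and_sub_iff {n : ℤ} (hn : n ≠ 0) (P Q : ℤ) :
    (2 * n ∣ P + Q ∧ 2 * n ∣ P - Q) ↔
      (2 * n ∣ P ∧ 2 * n ∣ Q) ∨ (2 * n ∣ P + n ∧ 2 * n ∣ Q + n) := by
  by_cases hPQ : n ∣ P ∧ n ∣ Q
  · obtain ⟨⟨c, rfl⟩, ⟨d, rfl⟩⟩ := hPQ
    have key : ∀ x y : ℤ, y = n * x → (2 * n ∣ y ↔ 2 ∣ x) := by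
      rintro x y rfl
      rw [mul_comm 2 n, mul_dvd_mul_iff_left hn]
    rw [key (c + d) _ (by ring), key (c - d) _ (by ring), key c _ rfl, key d _ rfl,
      key (c + 1) _ (by ring), key (d + 1) _ (by ring)]
    omega
  · have hn_dvd : ∀ x, 2 * n ∣ x → n ∣ x := fun x => dvd_of_mul_left_dvd
    refine iff_of_false (fun h => hPQ ?_) (fun h => hPQ ?_)
    · have h2 : 2 * n ∣ 2 * P := by simpa [two_mul] using dvd_add h.1 h.2
      have h2' : 2 * n ∣ 2 * Q := by simpa [two_mul] using dvd_sub h.1 h.2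
      exact ⟨(mul_dvd_mul_iff_left two_ne_zero).mp h2,
        (mul_dvd_mul_iff_left two_ne_zero).mp h2'⟩
    · rcases h with ⟨hP, hQ⟩ | ⟨hP, hQ⟩
      · exact ⟨hn_dvd _ hP, hn_dvd _ hQ⟩
      · exact ⟨dvd_add_self_right.mp (hn_dvd _ hP), dvd_add_self_right.mp (hn_dvd _ hQ)⟩

theorem sum_lamStar_eq_sum_filter_even {M : Type*} [AddCommMonoid M] (n : ℕ)
    (g : ℤ × ℤ → M) :
    ∑ ν ∈ LamStar n, g (ν.1 + ν.2, ν.1 - ν.2)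
      = ∑ w ∈ Finset.Icc (-(n : ℤ)) n ×ˢ Finset.Icc (-(n : ℤ)) n with Even (w.1 + w.2), g w := by
  refine Finset.sum_nbij' (fun ν => (ν.1 + ν.2, ν.1 - ν.2))
    (fun w => ((w.1 + w.2) / 2, (w.1 - w.2) / 2)) ?_ ?_ ?_ ?_ (fun _ _ => rfl) <;>
    intro x hx <;>
    simp only [LamStar, Finset.mem_filter, Finset.mem_product, Finset.mem_Icc, Prod.le_def,
      Int.even_iff, abs_le, Prod.ext_iff] at hx ⊢ <;>
    omega

theorem ctilde_eq_trapezoidWeight_mul {n : ℕ} {ν : ℤ × ℤ} (hν : ν ∈ LamStar n) :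
    (ctilde n ν : ℂ) = trapezoidWeight n (ν.1 + ν.2) * trapezoidWeight n (ν.1 - ν.2) := by
  simp only [LamStar, Finset.mem_filter] at hν
  obtain ⟨-, h₁, h₂⟩ := hν
  unfold ctilde trapezoidWeight
  split_ifs <;> first | omega | norm_num

theorem e2_pt2 {n : ℕ} (hn : 0 < n) (ν m : ℤ × ℤ) :
    e2 ν (pt2 n m)
      = Complex.exp (2 * Real.pi * Complex.I / (2 * n : ℕ)) ^ (ν.1 * m.1 + ν.2 * m.2) := by
  rw [e2, pt2, ← Complex.exp_int_mul]
  congr 1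
  have : (n : ℂ) ≠ 0 := by exact_mod_cast hn.ne'
  push_cast
  field_simp

theorem sum_lamStar_ctilde_mul_zpow {n : ℕ} {ζ : ℂ} (hζ : ζ ^ (n : ℤ) = -1) (P Q : ℤ) :
    ∑ ν ∈ LamStar n, (ctilde n ν : ℂ) * ζ ^ (ν.1 * (P + Q) + ν.2 * (P - Q))
      = 2⁻¹ * (trapezoidSum n ζ P * trapezoidSum n ζ Q
        + trapezoidSum n ζ (P + n) * trapezoidSum n ζ (Q + n)) := by
  have hζ0 : ζ ≠ 0 := by
    rintro rfl
    rw [zero_zpow_eq] at hζ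
    split_ifs at hζ <;> norm_num at hζ
  have sign_twist : ∀ u p : ℤ, (-1) ^ u * ζ ^ (u * p) = ζ ^ (u * (p + n)) := by
    intro u p
    rw [← hζ, ← zpow_mul, ← zpow_add₀ hζ0]
    ring_nf
  set a : ℤ → ℂ := trapezoidWeight n
  set g : ℤ × ℤ → ℂ := fun w => a w.1 * a w.2 * ζ ^ (w.1 * P + w.2 * Q)
  calc _ = ∑ ν ∈ LamStar n, g (ν.1 + ν.2, ν.1 - ν.2) := by
        refine Finset.sum_congr rfl fun ν hν => ?_
        rw [ctilde_eq_trapezoidWeight_mul hν]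
        congr 2
        ring
    _ = 2⁻¹ * ∑ w ∈ Finset.Icc (-(n : ℤ)) n ×ˢ Finset.Icc (-(n : ℤ)) n,
          (1 + (-1) ^ (w.1 + w.2)) * g w := by
        rw [sum_lamStar_eq_sum_filter_even n g, sum_filter_even_eq_half_sum]
    _ = _ := by
        simp only [trapezoidSum, g, Finset.sum_mul_sum, ← Finset.sum_add_distrib,
          Finset.sum_product]
        congr 1
        refine Finset.sum_congr rfl fun u _ => Finset.sum_congr rfl fun v _ => ?_
        rw [← sign_twist u P, ← sign_twist v Q, zpow_add₀ (by norm_num), zpow_add₀ hζ0]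
        ring

theorem phiStar_pt2_add_sub {n : ℕ} (hn : 0 < n) (P Q : ℤ) :
    PhiStar n (pt2 n (P + Q, P - Q))
      = if 2 * (n : ℤ) ∣ P + Q ∧ 2 * (n : ℤ) ∣ P - Q then 1 else 0 := by
  simp only [PhiStar, e2_pt2 hn]
  set ζ := Complex.exp (2 * Real.pi * Complex.I / (2 * n : ℕ))
  have hζ : IsPrimitiveRoot ζ (2 * n) := Complex.isPrimitiveRoot_exp _ (by omega)
  have hζn : ζ ^ (n : ℤ) = -1 := by
    have h2 := hζ.pow_of_dvd hn.ne' (dvd_mul_left n 2)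
    rw [Nat.mul_div_cancel _ hn] at h2
    rw [zpow_natCast, h2.eq_neg_one_of_two_right]
  have hn' : (n : ℤ) ≠ 0 := by exact_mod_cast hn.ne'
  have exclusive : ∀ x : ℤ, 2 * (n : ℤ) ∣ x → ¬ 2 * (n : ℤ) ∣ x + n := fun x hx hxn => by
    have := Int.le_of_dvd (by omega) ((dvd_add_right hx).mp hxn)
    omega
  rw [sum_lamStar_ctilde_mul_zpow hζn]
  simp only [hζ.trapezoidSum_eq hn, two_mul_dvd_add_and_sub_iff hn']
  by_cases hP : 2 * (n : ℤ) ∣ P <;> by_cases hQ : 2 * (n : ℤ) ∣ Q <;>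
    by_cases hP' : 2 * (n : ℤ) ∣ P + n <;> by_cases hQ' : 2 * (n : ℤ) ∣ Q + n <;>
    simp_all <;> field_simp

theorem phiStar_pt2 {n : ℕ} (hn : 0 < n) {m : ℤ × ℤ} (hm : m.1 % 2 = m.2 % 2) :
    PhiStar n (pt2 n m) = if 2 * (n : ℤ) ∣ m.1 ∧ 2 * (n : ℤ) ∣ m.2 then 1 else 0 := by
  obtain ⟨P, Q, rfl⟩ : ∃ P Q : ℤ, m = (P + Q, P - Q) :=
    ⟨(m.1 + m.2) / 2, (m.1 - m.2) / 2, Prod.ext (by omega) (by omega)⟩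
  exact phiStar_pt2_add_sub hn P Q

def lam1 (n : ℕ) (t : ℤ) : ℂ := if t = 0 ∨ t = n then 1 else 2

theorem lam2_eq_lam1_mul {n : ℕ} {k : ℤ × ℤ} (hk₁ : 0 ≤ k.1 ∧ k.1 ≤ n)
    (hk₂ : 0 ≤ k.2 ∧ k.2 ≤ n) :
    (lam2 n k : ℂ) = lam1 n k.1 * lam1 n k.2 := by
  unfold lam2 lam1
  split_ifs <;> first | omega | norm_num

theorem two_mul_dvd_sub_iff {n j k : ℤ} (hj : 0 ≤ j ∧ j ≤ n) (hk : 0 ≤ k ∧ k ≤ n) :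
    2 * n ∣ j - k ↔ j = k := by
  refine ⟨fun h => ?_, fun h => by simp [h]⟩
  by_contra hjk
  have := Int.eq_zero_of_abs_lt_dvd h (by rw [abs_lt]; omega)
  omega

theorem two_mul_dvd_neg_sub_iff {n j k : ℤ} (hj : 0 ≤ j ∧ j ≤ n) (hk : 0 ≤ k ∧ k ≤ n) :
    2 * n ∣ -j - k ↔ j = k ∧ (j = 0 ∨ j = n) := by
  constructor
  · intro h
    by_cases hjk : j + k = 2 * n ∨ j + k = 0
    · omega
    · have := Int.eq_zero_of_abs_lt_dvd h (by rw [abs_lt]; omega)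
      omega
  · rintro ⟨rfl, rfl | rfl⟩
    · simp
    · exact ⟨-1, by ring⟩

theorem lam1_div_two_mul_sum_sign_dvd {n : ℕ} {j k : ℤ} (hj : 0 ≤ j ∧ j ≤ n)
    (hk : 0 ≤ k ∧ k ≤ n) :
    lam1 n k / 2 * ∑ ε ∈ ({-1, 1} : Finset ℤ), (if 2 * (n : ℤ) ∣ ε * j - k then 1 else 0 : ℂ)
      = if k = j then 1 else 0 := by
  simp only [Finset.sum_pair (show (-1 : ℤ) ≠ 1 by norm_num), neg_one_mul, one_mul,
    two_mul_dvd_neg_sub_iff hj hk, two_mul_dvd_sub_iff hj hk, lam1]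
  split_ifs <;> first | omega | norm_num

theorem ell2_pt2 {n : ℕ} (hn : 0 < n) {j k : ℤ × ℤ} (hj : j ∈ Xi2 n) (hk : k ∈ Xi2 n) :
    ell2 n k (pt2 n j) = if k = j then 1 else 0 := by
  simp only [Xi2, Finset.mem_filter, Finset.mem_Icc, Prod.le_def] at hj hk
  have node : ∀ ε : ℤ × ℤ,
      ((ε.1 : ℝ) * (pt2 n j).1 - k.1 / (2 * n), (ε.2 : ℝ) * (pt2 n j).2 - k.2 / (2 * n))
        = pt2 n (ε.1 * j.1 - k.1, ε.2 * j.2 - k.2) := by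
    intro ε
    simp only [pt2, Prod.ext_iff]
    push_cast
    constructor <;> ring
  have phi : ∀ ε ∈ (({-1, 1} : Finset ℤ) ×ˢ ({-1, 1} : Finset ℤ)),
      PhiStar n (pt2 n (ε.1 * j.1 - k.1, ε.2 * j.2 - k.2))
        = (if 2 * (n : ℤ) ∣ ε.1 * j.1 - k.1 then 1 else 0) *
          (if 2 * (n : ℤ) ∣ ε.2 * j.2 - k.2 then 1 else 0) := by
    rintro ⟨ε₁, ε₂⟩ hε
    simp only [Finset.mem_product, Finset.mem_insert, Finset.mem_singleton] at hε
    rw [phiStar_pt2 hn, ite_zero_mul_ite_zero, one_mul]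
    rcases hε with ⟨rfl | rfl, rfl | rfl⟩ <;> simp only <;> omega
  rw [ell2, Finset.sum_congr rfl fun ε _ => congrArg (PhiStar n) (node ε),
    Finset.sum_congr rfl phi, lam2_eq_lam1_mul (by omega) (by omega)]
  simp only [Finset.sum_product]
  calc _ = (lam1 n k.1 / 2 * ∑ ε ∈ ({-1, 1} : Finset ℤ),
              (if 2 * (n : ℤ) ∣ ε * j.1 - k.1 then 1 else 0 : ℂ))
        * (lam1 n k.2 / 2 * ∑ ε ∈ ({-1, 1} : Finset ℤ),
              (if 2 * (n : ℤ) ∣ ε * j.2 - k.2 then 1 else 0 : ℂ)) := by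
        rw [mul_mul_mul_comm, Finset.sum_mul_sum]
        ring
    _ = if k = j then 1 else 0 := by
        rw [lam1_div_two_mul_sum_sign_dvd (by omega) (by omega),
          lam1_div_two_mul_sum_sign_dvd (by omega) (by omega), ite_zero_mul_ite_zero, one_mul]
        exact if_congr Prod.ext_iff.symm rfl rfl

theorem algebraic_interpolation_nodes_2d (n : ℕ) (hn : 0 < n) :
    (∀ f : ℝ × ℝ → ℂ, ∀ j ∈ Xi2 n,
      ∑ k ∈ Xi2 n, f (pt2 n k) * ell2 n k (pt2 n j) = f (pt2 n j)) ∧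
    (∀ j ∈ Xi2 n, ∀ k ∈ Xi2 n, ell2 n k (pt2 n j) = if k = j then 1 else 0) := by
  refine ⟨fun f j hj => ?_, fun j hj k hk => ell2_pt2 hn hj hk⟩
  rw [Finset.sum_congr rfl fun k hk => by rw [ell2_pt2 hn hj hk, mul_ite, mul_one, mul_zero],
    Finset.sum_ite_eq' _ _ _, if_pos hj]
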